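/- arXiv:2301.02381 — 2 statements merged into one kernel-verified Lean document; each statement's English description precedes it below -/
import Mathlib

section
/- Let $p$ be a prime power, $t \geq 1$, and let $f_1, f_2 \in \mathbb{F}_{p^t}[x]$ be coprime with $f_2 \neq 0$. Suppose $u, v \in \mathbb{F}_{p^t}$ and $l_1, l_2 \in \mathbb{F}_{p^t}[x]$ are coprime polynomials with $l_2 \neq 0$ such that, as rational functions, $$u x + v \frac{f_1(x)}{f_2(x)} = \frac{l_1(x)^{p^t}}{l_2(x)^{p^t}} - \frac{l_1(x)}{l_2(x)}.$$ If $f_2$ is irreducible (in particular $\deg f_2 \geq 1$ or $f_2$ constant), then $u = 0$ and $v = 0$. -/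
open Polynomial

/-!
Write `r = l₁ / l₂` and `q = p ^ t ≥ 2`. Clearing denominators in `r ^ q - r = a / f₂` gives
`l₂ ^ q * a = (l₁ ^ q - l₁ * l₂ ^ (q - 1)) * f₂`, and the second factor is coprime to `l₂`, so
`l₂ ^ q ∣ f₂`; since `f₂` is squarefree, `l₂` is a unit and `r = g` is a polynomial. Then
`u x * f₂ + v * f₁ = (g ^ q - g) * f₂`, so the irreducible `f₂` divides the constant `v`,
forcing `v = 0`; finally `u x = g ^ q - g` is impossible for `u ≠ 0` because `g ^ q - g` has
degree `0` or `q * deg g ≥ 2`.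
-/

theorem IsCoprime.pow_sub_mul_pow {R : Type*} [CommRing R] {a b : R} (h : IsCoprime a b)
    (n : ℕ) : IsCoprime b (a ^ (n + 2) - a * b ^ (n + 1)) := by
  have key := h.symm.pow_right (n := n + 2) |>.add_mul_left_right (-(a * b ^ n))
  convert key using 1
  ring

namespace Polynomial

variable {K : Type*} [Field K]

theorem natDegree_pow_sub_self_ne_one {q : ℕ} (hq : 2 ≤ q) (g : K[X]) :
    (g ^ q - g).natDegree ≠ 1 := by
  rcases Nat.eq_zero_or_pos g.natDegree with hg | hg
  · obtain ⟨a, rfl⟩ := natDegree_eq_zero.mp hg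
    rw [← C_pow, ← C_sub, natDegree_C]; exact zero_ne_one
  · have hlt : g.natDegree < (g ^ q).natDegree := by
      rw [natDegree_pow]; nlinarith
    rw [natDegree_sub_eq_left_of_natDegree_lt hlt, natDegree_pow]
    nlinarith

theorem exists_eq_algebraMap_of_pow_sub_self_eq_div {q : ℕ} (hq : 2 ≤ q) {a f l₁ l₂ : K[X]}
    (hf : Squarefree f) (hl : IsCoprime l₁ l₂) (hl₂ : l₂ ≠ 0)
    (h : (algebraMap K[X] (RatFunc K) l₁ / algebraMap K[X] (RatFunc K) l₂) ^ q -
        algebraMap K[X] (RatFunc K) l₁ / algebraMap K[X] (RatFunc K) l₂ =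
      algebraMap K[X] (RatFunc K) a / algebraMap K[X] (RatFunc K) f) :
    ∃ g : K[X], algebraMap K[X] (RatFunc K) l₁ / algebraMap K[X] (RatFunc K) l₂ =
      algebraMap K[X] (RatFunc K) g := by
  obtain ⟨n, rfl⟩ : ∃ n, q = n + 2 := ⟨q - 2, by omega⟩
  have hf₀ : algebraMap K[X] (RatFunc K) f ≠ 0 := RatFunc.algebraMap_ne_zero hf.ne_zero
  have hl₀ : algebraMap K[X] (RatFunc K) l₂ ≠ 0 := RatFunc.algebraMap_ne_zero hl₂
  have hpoly : l₂ ^ (n + 2) * a = (l₁ ^ (n + 2) - l₁ * l₂ ^ (n + 1)) * f := by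
    apply RatFunc.algebraMap_injective K
    apply mul_left_cancel₀ hl₀
    rw [div_pow] at h
    field_simp at h
    simp only [map_mul, map_sub, map_pow]
    linear_combination -h
  have hdvd : l₂ ^ (n + 2) ∣ f :=
    (hl.pow_sub_mul_pow n).pow_left.dvd_of_dvd_mul_left (hpoly ▸ dvd_mul_right _ _)
  obtain ⟨w, hw⟩ := (hf l₂ (dvd_trans ⟨l₂ ^ n, by ring⟩ hdvd)).exists_right_inv
  refine ⟨l₁ * w, ?_⟩
  rw [div_eq_iff hl₀, ← map_mul, mul_assoc, mul_comm w, hw, mul_one]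

theorem eq_zero_of_C_mul_X_mul_add_C_mul_eq {q : ℕ} (hq : 2 ≤ q) {u v : K} {f₁ f₂ g : K[X]}
    (hcop : IsCoprime f₁ f₂) (hirr : Irreducible f₂)
    (h : C u * X * f₂ + C v * f₁ = (g ^ q - g) * f₂) :
    u = 0 ∧ v = 0 := by
  have hv : v = 0 := by
    by_contra hv
    have hdvd : f₂ ∣ C v * f₁ := ⟨g ^ q - g - C u * X, by linear_combination h⟩
    have hdvd' : f₂ ∣ C v := hcop.symm.dvd_of_dvd_mul_right hdvd
    exact hirr.not_isUnit (isUnit_of_dvd_unit hdvd' (isUnit_C.mpr (Ne.isUnit hv)))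
  refine ⟨?_, hv⟩
  subst hv
  have hlin : C u * X = g ^ q - g := by
    apply mul_right_cancel₀ hirr.ne_zero
    simpa using h
  by_contra hu
  exact natDegree_pow_sub_self_ne_one hq g (hlin ▸ natDegree_C_mul_X u hu)

end Polynomial

theorem stmt_8_general (p t : ℕ) (hp : ∃ q r : ℕ, q.Prime ∧ 0 < r ∧ p = q ^ r) (ht : 0 < t)
    (F : Type*) [Field F]
    (f₁ f₂ : F[X]) (hcop : IsCoprime f₁ f₂) (hirr : Irreducible f₂)
    (u v : F) (l₁ l₂ : F[X]) (hlcop : IsCoprime l₁ l₂) (hl₂ : l₂ ≠ 0)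
    (heq : RatFunc.C u * RatFunc.X +
        RatFunc.C v * (algebraMap F[X] (RatFunc F) f₁ / algebraMap F[X] (RatFunc F) f₂) =
      algebraMap F[X] (RatFunc F) (l₁ ^ (p ^ t)) / algebraMap F[X] (RatFunc F) (l₂ ^ (p ^ t)) -
        algebraMap F[X] (RatFunc F) l₁ / algebraMap F[X] (RatFunc F) l₂) :
    u = 0 ∧ v = 0 := by
  have hq : 2 ≤ p ^ t := by
    obtain ⟨q, r, hq, hr, rfl⟩ := hp
    exact hq.two_le.trans ((Nat.le_self_pow hr.ne' q).trans (Nat.le_self_pow ht.ne' _))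
  have hf₂ : algebraMap F[X] (RatFunc F) f₂ ≠ 0 := RatFunc.algebraMap_ne_zero hirr.ne_zero
  have hlhs : RatFunc.C u * RatFunc.X +
      RatFunc.C v * (algebraMap F[X] (RatFunc F) f₁ / algebraMap F[X] (RatFunc F) f₂) =
      algebraMap F[X] (RatFunc F) (C u * X * f₂ + C v * f₁) / algebraMap F[X] (RatFunc F) f₂ := by
    simp only [map_add, map_mul, RatFunc.algebraMap_C, RatFunc.algebraMap_X]
    field_simp
  rw [hlhs, map_pow, map_pow, ← div_pow] at heq
  obtain ⟨g, hg⟩ :=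
    exists_eq_algebraMap_of_pow_sub_self_eq_div hq hirr.squarefree hlcop hl₂ heq.symm
  rw [hg, div_eq_iff hf₂, ← map_pow, ← map_sub, ← map_mul] at heq
  exact eq_zero_of_C_mul_X_mul_add_C_mul_eq hq hcop hirr (RatFunc.algebraMap_injective F heq)

theorem stmt_8 (p t : ℕ) (hp : ∃ q r : ℕ, q.Prime ∧ 0 < r ∧ p = q ^ r) (ht : 0 < t)
    (F : Type*) [Field F] [Fintype F] [DecidableEq F] (hF : Fintype.card F = p ^ t)
    (f₁ f₂ : F[X]) (hcop : IsCoprime f₁ f₂) (hf₂ : f₂ ≠ 0) (hirr : Irreducible f₂)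
    (u v : F) (l₁ l₂ : F[X]) (hlcop : IsCoprime l₁ l₂) (hl₂ : l₂ ≠ 0)
    (heq : RatFunc.C u * RatFunc.X +
        RatFunc.C v * (algebraMap F[X] (RatFunc F) f₁ / algebraMap F[X] (RatFunc F) f₂) =
      algebraMap F[X] (RatFunc F) (l₁ ^ (p ^ t)) / algebraMap F[X] (RatFunc F) (l₂ ^ (p ^ t)) -
        algebraMap F[X] (RatFunc F) l₁ / algebraMap F[X] (RatFunc F) l₂) :
    u = 0 ∧ v = 0 :=
  stmt_8_general p t hp ht F f₁ f₂ hcop hirr u v l₁ l₂ hlcop hl₂ heq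
end

section
/- Let $k$ be a divisor of $p^t - 1$ and let $q_1, \ldots, q_m$ be all the primes dividing $p^t - 1$ but not $k$. Let $A(k_1, k_2)$ denote the number of elements $\epsilon \in \mathbb{F}_{p^t}$ (avoiding zeros and poles of a fixed rational function $f$) such that $\epsilon$ is $k_1$-free, $f(\epsilon)$ is $k_2$-free, $\mathrm{Tr}(\epsilon) = a$ and $\mathrm{Tr}(f(\epsilon)) = b$. Then $$A(p^t-1, p^t-1) \geq \sum_{i=1}^{m} A(k, q_i k) + \sum_{i=1}^{m} A(q_i k, k) - (2m - 1)\, A(k, k).$$ -/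
/-
Every prime factor of `p ^ t - 1` either divides `d` or is one of the `q_i`, so an element is
primitive iff it is `d`-free and `q_i d`-free for every `i`. Hence the set counted by
`A(p^t-1, p^t-1)` is the intersection of the `2m` sets counted by `A(d, q_i d)` and
`A(q_i d, d)`, all contained in the set counted by `A(d, d)`, and the inequality is the
elementary sieve `|T ∩ ⋂ S_i| ≥ ∑ |S_i| - (N - 1) |T|` for `N` subsets `S_i` of a finite set `T`.
-/

open Polynomial

/-- A nonzero field element `ε` is `u`-free if `ε = ξ ^ s` with `s ∣ u` forces `s = 1`. -/
def IsFreeElem {K : Type*} [Field K] (u : ℕ) (ε : K) : Prop :=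
  ε ≠ 0 ∧ ∀ (ξ : K) (s : ℕ), s ∣ u → ε = ξ ^ s → s = 1

theorem Set.ncard_sum_sub_le_ncard_inter_biInter {α ι : Type*} [Finite α] (T : Set α)
    (I : Finset ι) (S : ι → Set α) (hS : ∀ i ∈ I, S i ⊆ T) :
    (∑ i ∈ I, ((S i).ncard : ℤ)) - ((I.card : ℤ) - 1) * T.ncard ≤
      ((T ∩ ⋂ i ∈ I, S i).ncard : ℤ) := by
  classical
  induction I using Finset.induction_on with
  | empty => simp
  | @insert i I hi IH =>
    set B := T ∩ ⋂ j ∈ I, S j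
    have hIH := IH fun j hj => hS j (Finset.mem_insert_of_mem hj)
    have hinter : T ∩ ⋂ j ∈ insert i I, S j = B ∩ S i := by
      rw [Finset.set_biInter_insert, Set.inter_left_comm, Set.inter_comm]
    have hunion : ((B ∪ S i).ncard : ℤ) ≤ T.ncard := by
      exact_mod_cast Set.ncard_le_ncard
        (Set.union_subset Set.inter_subset_left (hS i (Finset.mem_insert_self i I)))
    have hmodular : ((B ∩ S i).ncard : ℤ) + (B ∪ S i).ncard = B.ncard + (S i).ncard := by
      exact_mod_cast Set.ncard_inter_add_ncard_union B (S i)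
    rw [hinter, Finset.sum_insert hi, Finset.card_insert_of_notMem hi]
    push_cast
    linarith

section IsFreeElem

variable {K : Type*} [Field K]

theorem IsFreeElem.of_dvd {u v : ℕ} (h : u ∣ v) {ε : K} (hε : IsFreeElem v ε) :
    IsFreeElem u ε :=
  ⟨hε.1, fun ξ s hs hξ => hε.2 ξ s (hs.trans h) hξ⟩

theorem isFreeElem_iff_forall_mul {n d : ℕ} (hd : d ∣ n) (Q : Finset ℕ)
    (hQ : ∀ r : ℕ, r ∈ Q ↔ r.Prime ∧ r ∣ n ∧ ¬ r ∣ d) (ε : K) :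
    IsFreeElem n ε ↔ IsFreeElem d ε ∧ ∀ r ∈ Q, IsFreeElem (r * d) ε := by
  constructor
  · intro h
    refine ⟨h.of_dvd hd, fun r hr => h.of_dvd ?_⟩
    obtain ⟨hr, hrn, hrd⟩ := (hQ r).mp hr
    exact ((hr.coprime_iff_not_dvd).mpr hrd).mul_dvd_of_dvd_of_dvd hrn hd
  · rintro ⟨hfree, hfreeQ⟩
    refine ⟨hfree.1, fun ξ s hs hξ => ?_⟩
    by_contra hs1
    -- A nontrivial `s`-th power is also a `q`-th power for the least prime factor `q` of `s`.
    set q := s.minFac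
    have hq : q.Prime := Nat.minFac_prime hs1
    have hpow : ε = (ξ ^ (s / q)) ^ q := by
      rw [← pow_mul, Nat.div_mul_cancel (Nat.minFac_dvd s), hξ]
    by_cases hqd : q ∣ d
    · exact hq.one_lt.ne' (hfree.2 _ _ hqd hpow)
    · have hqQ : q ∈ Q := (hQ q).mpr ⟨hq, (Nat.minFac_dvd s).trans hs, hqd⟩
      exact hq.one_lt.ne' ((hfreeQ q hqQ).2 _ _ (dvd_mul_right q d) hpow)

end IsFreeElem

section FreePairSet

variable {K : Type*} [Field K] (P : K → Prop) (g : K → K)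

def freePairSet (k₁ k₂ : ℕ) : Set K :=
  {ε | P ε ∧ IsFreeElem k₁ ε ∧ IsFreeElem k₂ (g ε)}

variable {P g}

theorem freePairSet_subset_of_dvd {u u' v v' : ℕ} (hu : u' ∣ u) (hv : v' ∣ v) :
    freePairSet P g u v ⊆ freePairSet P g u' v' :=
  fun _ ⟨hP, hfree₁, hfree₂⟩ => ⟨hP, hfree₁.of_dvd hu, hfree₂.of_dvd hv⟩

theorem freePairSet_eq_inter_biInter {n d : ℕ} (hd : d ∣ n) (Q : Finset ℕ)
    (hQ : ∀ r : ℕ, r ∈ Q ↔ r.Prime ∧ r ∣ n ∧ ¬ r ∣ d) :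
    freePairSet P g n n = freePairSet P g d d ∩
      ⋂ i ∈ Q.disjSum Q,
        Sum.elim (fun r => freePairSet P g (r * d) d) (fun r => freePairSet P g d (r * d)) i := by
  ext ε
  simp only [freePairSet, Set.mem_inter_iff, Set.mem_iInter, Sum.forall, Finset.inl_mem_disjSum,
    Finset.inr_mem_disjSum, Sum.elim_inl, Sum.elim_inr, Set.mem_ofPred_eq,
    isFreeElem_iff_forall_mul hd Q hQ]
  constructor
  · rintro ⟨hP, ⟨h₁, hQ₁⟩, h₂, hQ₂⟩
    exact ⟨⟨hP, h₁, h₂⟩, fun r hr => ⟨hP, hQ₁ r hr, h₂⟩, fun r hr => ⟨hP, h₁, hQ₂ r hr⟩⟩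
  · rintro ⟨⟨hP, h₁, h₂⟩, hQ₁, hQ₂⟩
    exact ⟨hP, ⟨h₁, fun r hr => (hQ₁ r hr).2.1⟩, h₂, fun r hr => (hQ₂ r hr).2.2⟩

end FreePairSet

theorem stmt_15_general (p t : ℕ)
    (k K : Type*) [Field k] [Field K] [Fintype K] [Algebra k K]
    (f₁ f₂ : K[X])
    (a b : k)
    (A : ℕ → ℕ → ℕ)
    (hA : ∀ k₁ k₂ : ℕ, A k₁ k₂ =
      Set.ncard {ε : K | f₁.eval ε ≠ 0 ∧ f₂.eval ε ≠ 0 ∧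
        IsFreeElem k₁ ε ∧ IsFreeElem k₂ (f₁.eval ε / f₂.eval ε) ∧
        Algebra.trace k K ε = a ∧ Algebra.trace k K (f₁.eval ε / f₂.eval ε) = b})
    (d : ℕ) (hd : d ∣ p ^ t - 1)
    (Q : Finset ℕ) (hQ : ∀ r : ℕ, r ∈ Q ↔ r.Prime ∧ r ∣ p ^ t - 1 ∧ ¬ r ∣ d) :
    (∑ r ∈ Q, (A d (r * d) : ℤ)) + (∑ r ∈ Q, (A (r * d) d : ℤ)) -
        (2 * (Q.card : ℤ) - 1) * (A d d : ℤ) ≤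
      (A (p ^ t - 1) (p ^ t - 1) : ℤ) := by
  set P : K → Prop := fun ε => f₁.eval ε ≠ 0 ∧ f₂.eval ε ≠ 0 ∧ Algebra.trace k K ε = a ∧
    Algebra.trace k K (f₁.eval ε / f₂.eval ε) = b
  set F := freePairSet P fun ε => f₁.eval ε / f₂.eval ε
  have hAF : ∀ k₁ k₂, A k₁ k₂ = (F k₁ k₂).ncard := by
    intro k₁ k₂
    rw [hA]
    congr 1
    ext ε
    simp only [F, freePairSet, P, Set.mem_ofPred_eq]
    tauto
  have hsieve := Set.ncard_sum_sub_le_ncard_inter_biInter (F d d) (Q.disjSum Q)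
    (Sum.elim (fun r => F (r * d) d) fun r => F d (r * d)) fun i _ =>
      match i with
      | .inl r => freePairSet_subset_of_dvd (dvd_mul_left d r) dvd_rfl
      | .inr r => freePairSet_subset_of_dvd dvd_rfl (dvd_mul_left d r)
  rw [← freePairSet_eq_inter_biInter hd Q hQ, Finset.sum_disjSum, Finset.card_disjSum] at hsieve
  simp only [hAF, Sum.elim_inl, Sum.elim_inr] at hsieve ⊢
  push_cast at hsieve
  linarith

theorem stmt_15 (p t : ℕ) (hp : ∃ q r : ℕ, q.Prime ∧ 0 < r ∧ p = q ^ r) (ht : 0 < t)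
    (k K : Type*) [Field k] [Fintype k] [Field K] [Fintype K] [Algebra k K]
    (hk : Fintype.card k = p) (hK : Fintype.card K = p ^ t)
    (f₁ f₂ : K[X]) (h₁ : Irreducible f₁) (h₂ : Irreducible f₂) (hcop : IsCoprime f₁ f₂)
    (a b : k)
    (A : ℕ → ℕ → ℕ)
    (hA : ∀ k₁ k₂ : ℕ, A k₁ k₂ =
      Set.ncard {ε : K | f₁.eval ε ≠ 0 ∧ f₂.eval ε ≠ 0 ∧
        IsFreeElem k₁ ε ∧ IsFreeElem k₂ (f₁.eval ε / f₂.eval ε) ∧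
        Algebra.trace k K ε = a ∧ Algebra.trace k K (f₁.eval ε / f₂.eval ε) = b})
    (d : ℕ) (hd : d ∣ p ^ t - 1)
    (Q : Finset ℕ) (hQ : ∀ r : ℕ, r ∈ Q ↔ r.Prime ∧ r ∣ p ^ t - 1 ∧ ¬ r ∣ d) :
    (∑ r ∈ Q, (A d (r * d) : ℤ)) + (∑ r ∈ Q, (A (r * d) d : ℤ)) -
        (2 * (Q.card : ℤ) - 1) * (A d d : ℤ) ≤
      (A (p ^ t - 1) (p ^ t - 1) : ℤ) :=
  stmt_15_general p t k K f₁ f₂ a b A hA d hd Q hQ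
end
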